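/- Let R be a commutative ring, 𝔗 a torsion theory over R, and M an R-module with M ∈ 𝔗. Then R/𝔭 ∈ 𝔗 for every prime ideal 𝔭 in the support Supp_R(M) of M; in particular, R/𝔭 ∈ 𝔗 for every weakly associated prime 𝔭 ∈ wAss_R(M). -/
import Mathlib


open CategoryTheory

universe u

noncomputable section

/-- A torsion theory over `R`: a class of `R`-modules closed under isomorphism, submodules,
quotient modules, extensions, and directed colimits (formulated as closure under directed
unions of submodules). -/
structure IsTorsionTheory (R : Type u) [CommRing R] (T : Set (ModuleCat.{u} R)) : Prop where
  mem_of_iso : ∀ {N N' : ModuleCat.{u} R}, (N ≅ N') → N ∈ T → N' ∈ T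
  submodule_mem : ∀ {N : ModuleCat.{u} R}, N ∈ T → ∀ S : Submodule R N,
    ModuleCat.of R S ∈ T
  quotient_mem : ∀ {N : ModuleCat.{u} R}, N ∈ T → ∀ S : Submodule R N,
    ModuleCat.of R (N ⧸ S) ∈ T
  ext_mem : ∀ {N : ModuleCat.{u} R} (S : Submodule R N),
    ModuleCat.of R S ∈ T → ModuleCat.of R (N ⧸ S) ∈ T → N ∈ T
  directed_mem : ∀ {N : ModuleCat.{u} R} {ι : Type u} [Nonempty ι] (S : ι → Submodule R N),
    Directed (· ≤ ·) S → (∀ i, ModuleCat.of R (S i) ∈ T) → iSup S = ⊤ → N ∈ T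

variable {R : Type u} [CommRing R]

/-- The weakly associated primes of `M`: the primes that are minimal over the annihilator
`(0 :_R m)` of some `m ∈ M`. -/
def weakAssocPrimes (R : Type u) [CommRing R] (M : Type u) [AddCommGroup M] [Module R M] :
    Set (Ideal R) :=
  { p | ∃ m : M, p ∈ (Ideal.torsionOf R M m).minimalPrimes }

/-- **Theorem.** Let `𝔗` be a torsion theory and `M ∈ 𝔗`. Then `R/𝔭 ∈ 𝔗` for every prime
`𝔭` in the support of `M`; in particular `R/𝔭 ∈ 𝔗` for every weakly associated prime
`𝔭 ∈ wAss_R(M)`. -/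
theorem quotient_prime_mem_of_mem (T : Set (ModuleCat.{u} R)) (hT : IsTorsionTheory R T)
    (M : Type u) [AddCommGroup M] [Module R M] (hM : ModuleCat.of R M ∈ T) :
    (∀ p ∈ Module.support R M, ModuleCat.of R (R ⧸ p.asIdeal) ∈ T) ∧
      ∀ p ∈ weakAssocPrimes R M, ModuleCat.of R (R ⧸ p) ∈ T := by
  -- key: if `torsionOf m ≤ J`, then `R ⧸ J ∈ T`.
  have key : ∀ (m : M) (J : Ideal R), Ideal.torsionOf R M m ≤ J →
      ModuleCat.of R (R ⧸ J) ∈ T := by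
    intro m J hle
    -- `R ⧸ torsionOf m ≅ R ∙ m`, a submodule of `M`, hence in `T`.
    have h1 : ModuleCat.of R (R ⧸ Ideal.torsionOf R M m) ∈ T :=
      hT.mem_of_iso (Ideal.quotTorsionOfEquivSpanSingleton R M m).symm.toModuleIso
        (hT.submodule_mem hM (Submodule.span R {m}))
    -- `R ⧸ J` is a quotient of `R ⧸ torsionOf m`.
    have h2 := hT.quotient_mem h1 (Submodule.map (Ideal.torsionOf R M m).mkQ J)
    exact hT.mem_of_iso
      (Submodule.quotientQuotientEquivQuotient (Ideal.torsionOf R M m) J hle).toModuleIso h2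
  constructor
  · intro p hp
    obtain ⟨m, hm⟩ := (Module.mem_support_iff_exists_annihilator (p := p)).mp hp
    refine key m p.asIdeal (fun r hr => hm ?_)
    rw [Submodule.mem_annihilator_span_singleton]
    exact (Ideal.mem_torsionOf_iff m r).mp hr
  · rintro p ⟨m, hm⟩
    exact key m p hm.1.2
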